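/- arXiv:1204.5392 — 3 statements merged into one kernel-verified Lean document; each statement's English description precedes it below -/
import Mathlib

section
/- Explicit projection onto the Coulomb cone in the sliding regime: let μ ≥ 0 and let τ ∈ E satisfy τ_t ≠ 0, ‖τ_t‖ ≥ μ * τ_n and μ * ‖τ_t‖ ≥ -τ_n. Then the point p = τ - ((‖τ_t‖ - μ * τ_n)/(1 + μ^2)) • ((1/‖τ_t‖) • τ_t - μ • n) is the orthogonal projection of τ onto K_μ; that is, p ∈ K_μ and for every s ∈ K_μ one has ‖τ - p‖ ≤ ‖τ - s‖. -/
open scoped InnerProductSpace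

noncomputable section

/-- The ambient space `E = ℝ³`. -/
abbrev E := EuclideanSpace ℝ (Fin 3)

/-- Normal component of `x` relative to the unit normal `n`. -/
def xn (n x : E) : ℝ := ⟪x, n⟫_ℝ

/-- Tangential component of `x` relative to the unit normal `n`. -/
def xt (n x : E) : E := x - (⟪x, n⟫_ℝ) • n

/-- The Coulomb cone with friction coefficient `μ`. -/
def Kcone (n : E) (μ : ℝ) : Set E := {r | ‖xt n r‖ ≤ μ * xn n r}

/-! With `u = τ_t / ‖τ_t‖`, the candidate is `p = c • (μ • u + n)` for
`c = (μ ‖τ_t‖ + τ_n) / (1 + μ²) ≥ 0`, a point of the boundary ray of the cone through `u`, and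
`τ - p = α • (u - μ • n)` with `α = (‖τ_t‖ - μ τ_n) / (1 + μ²) ≥ 0`. The direction `u - μ • n`
is orthogonal to `p` and lies in the polar cone, so `⟪τ - p, s - p⟫ ≤ 0` for every `s` in the
cone, which makes `p` the nearest point. -/

theorem norm_sub_le_norm_sub_of_inner_sub_nonpos {F : Type*} [NormedAddCommGroup F]
    [InnerProductSpace ℝ F] {x p s : F} (h : ⟪x - p, s - p⟫_ℝ ≤ 0) : ‖x - p‖ ≤ ‖x - s‖ := by
  have hexp : ‖x - s‖ ^ 2 = ‖x - p‖ ^ 2 - 2 * ⟪x - p, s - p⟫_ℝ + ‖s - p‖ ^ 2 := by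
    rw [← norm_sub_sq_real, sub_sub_sub_cancel_right]
  refine le_of_sq_le_sq ?_ (norm_nonneg _)
  nlinarith [sq_nonneg ‖s - p‖]

theorem inner_sub_smul_smul_add_smul_eq_zero {F : Type*} [NormedAddCommGroup F]
    [InnerProductSpace ℝ F] {u n : F} (hu : ‖u‖ = 1) (hn : ‖n‖ = 1) (hun : ⟪u, n⟫_ℝ = 0)
    (μ c : ℝ) : ⟪u - μ • n, (c * μ) • u + c • n⟫_ℝ = 0 := by
  have huu : ⟪u, u⟫_ℝ = 1 := by rw [real_inner_self_eq_norm_sq, hu, one_pow]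
  have hnn : ⟪n, n⟫_ℝ = 1 := by rw [real_inner_self_eq_norm_sq, hn, one_pow]
  simp only [inner_sub_left, inner_add_right, real_inner_smul_left, real_inner_smul_right, huu,
    hnn, hun, real_inner_comm u n]
  ring

theorem xt_add_xn_smul (n x : E) : xt n x + xn n x • n = x := by
  simp [xt, xn]

theorem inner_xt_eq_zero (n x : E) (hn : ‖n‖ = 1) : ⟪xt n x, n⟫_ℝ = 0 := by
  rw [xt, inner_sub_left, real_inner_smul_left, real_inner_self_eq_norm_sq, hn]
  ring

theorem xn_smul_add_smul {n u : E} (hn : ‖n‖ = 1) (hun : ⟪u, n⟫_ℝ = 0) (a b : ℝ) :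
    xn n (a • u + b • n) = b := by
  rw [xn, inner_add_left, real_inner_smul_left, real_inner_smul_left, hun,
    real_inner_self_eq_norm_sq, hn]
  ring

theorem xt_smul_add_smul {n u : E} (hn : ‖n‖ = 1) (hun : ⟪u, n⟫_ℝ = 0) (a b : ℝ) :
    xt n (a • u + b • n) = a • u := by
  rw [xt, ← xn, xn_smul_add_smul hn hun, add_sub_cancel_right]

theorem smul_add_mem_Kcone {n u : E} (hn : ‖n‖ = 1) (hu : ‖u‖ = 1) (hun : ⟪u, n⟫_ℝ = 0)
    {μ c : ℝ} (hμ : 0 ≤ μ) (hc : 0 ≤ c) : (c * μ) • u + c • n ∈ Kcone n μ := by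
  rw [Kcone, Set.mem_ofPred_eq, xt_smul_add_smul hn hun, xn_smul_add_smul hn hun, norm_smul, hu,
    Real.norm_of_nonneg (mul_nonneg hc hμ)]
  linarith

theorem inner_sub_smul_nonpos_of_mem_Kcone {n u : E} (hu : ‖u‖ = 1) (hun : ⟪u, n⟫_ℝ = 0)
    {μ : ℝ} {s : E} (hs : s ∈ Kcone n μ) : ⟪u - μ • n, s⟫_ℝ ≤ 0 := by
  have hus : ⟪u, s⟫_ℝ = ⟪u, xt n s⟫_ℝ := by
    conv_lhs => rw [← xt_add_xn_smul n s]
    rw [inner_add_right, real_inner_smul_right, hun, mul_zero, add_zero]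
  have hbound : ⟪u, xt n s⟫_ℝ ≤ ‖xt n s‖ := by
    simpa [hu] using real_inner_le_norm u (xt n s)
  have hns : ⟪μ • n, s⟫_ℝ = μ * xn n s := by rw [real_inner_smul_left, xn, real_inner_comm]
  rw [inner_sub_left, hus, hns]
  linarith [show ‖xt n s‖ ≤ μ * xn n s from hs]

/-- Explicit orthogonal projection onto the Coulomb cone in the sliding regime. -/
theorem coulomb_projection_sliding (n : E) (hn : ‖n‖ = 1) (μ : ℝ) (hμ : 0 ≤ μ)
    (τ : E) (hτt : xt n τ ≠ 0)
    (h1 : μ * xn n τ ≤ ‖xt n τ‖) (h2 : -(xn n τ) ≤ μ * ‖xt n τ‖) :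
    τ - ((‖xt n τ‖ - μ * xn n τ) / (1 + μ ^ 2)) • ((1 / ‖xt n τ‖) • xt n τ - μ • n)
      ∈ Kcone n μ ∧
    ∀ s ∈ Kcone n μ,
      ‖τ - (τ - ((‖xt n τ‖ - μ * xn n τ) / (1 + μ ^ 2)) •
          ((1 / ‖xt n τ‖) • xt n τ - μ • n))‖ ≤ ‖τ - s‖ := by
  set a := ‖xt n τ‖
  set b := xn n τ
  set u := (1 / a) • xt n τ
  set α := (a - μ * b) / (1 + μ ^ 2)
  set c := (μ * a + b) / (1 + μ ^ 2)
  have ha : a ≠ 0 := norm_ne_zero_iff.mpr hτt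
  have hu : ‖u‖ = 1 := by
    rw [norm_smul, norm_div, norm_one, Real.norm_of_nonneg (norm_nonneg _), one_div_mul_cancel ha]
  have hun : ⟪u, n⟫_ℝ = 0 := by rw [real_inner_smul_left, inner_xt_eq_zero n τ hn, mul_zero]
  have hα : 0 ≤ α := div_nonneg (by linarith) (by positivity)
  have hc : 0 ≤ c := div_nonneg (by linarith) (by positivity)
  have hτ : τ = a • u + b • n := by
    rw [smul_smul, mul_one_div_cancel ha, one_smul, xt_add_xn_smul]
  have hp : τ - α • (u - μ • n) = (c * μ) • u + c • n := by
    rw [hτ]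
    match_scalars
    · simp only [α, c]; field_simp; ring
    · simp only [α, c]; field_simp; ring
  have hres : τ - ((c * μ) • u + c • n) = α • (u - μ • n) := by rw [← hp, sub_sub_cancel]
  rw [hp]
  refine ⟨smul_add_mem_Kcone hn hu hun hμ hc, fun s hs => ?_⟩
  apply norm_sub_le_norm_sub_of_inner_sub_nonpos
  rw [hres, real_inner_smul_left, inner_sub_right,
    inner_sub_smul_smul_add_smul_eq_zero hu hn hun, sub_zero]
  exact mul_nonpos_of_nonneg_of_nonpos hα (inner_sub_smul_nonpos_of_mem_Kcone hu hun hs)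
end
end

section
/- Characterization of the Signorini–Coulomb law via the bi-potential residual: let μ ≥ 0, let u ∈ E satisfy u_n ≥ 0 and let r ∈ K_μ. Then ⟪u, r⟫ + μ * r_n * ‖u_t‖ = 0 if and only if both the Signorini complementarity condition u_n * r_n = 0 holds and the Coulomb friction condition holds: either u_t = 0 (sticking), or ‖r_t‖ = μ * r_n together with ‖r_t‖ • u_t = -‖u_t‖ • r_t (sliding, with tangential velocity opposite to the tangential force). -/
open scoped InnerProductSpace

noncomputable section

/-! The residual splits as `u_n r_n + (⟪u_t, r_t⟫ + μ r_n ‖u_t‖)`. By Cauchy–Schwarz and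
`‖r_t‖ ≤ μ r_n` the tangential part is nonnegative, and it vanishes exactly when `u_t = 0` or
`r_t` is extremal in the cone and antiparallel to `u_t`. When `r_n ≥ 0` both parts are
nonnegative, so the residual vanishes iff each part does; when `r_n < 0` the cone with `μ ≥ 0`
forces `r_t = 0`, and only the normal part is left. -/

section Tangential

variable {F : Type*} [NormedAddCommGroup F] [InnerProductSpace ℝ F]

theorem inner_eq_neg_norm_mul_iff_real {a b : F} :
    ⟪a, b⟫_ℝ = -(‖a‖ * ‖b‖) ↔ ‖b‖ • a = -(‖a‖ • b) := by
  have h := inner_eq_norm_mul_iff_real (x := a) (y := -b)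
  rw [inner_neg_right, norm_neg, smul_neg] at h
  rw [← neg_eq_iff_eq_neg, h]

theorem inner_add_mul_norm_nonneg {a b : F} {c : ℝ} (hb : ‖b‖ ≤ c) :
    0 ≤ ⟪a, b⟫_ℝ + c * ‖a‖ := by
  have hcs : -(‖a‖ * ‖b‖) ≤ ⟪a, b⟫_ℝ := neg_le_of_abs_le (abs_real_inner_le_norm a b)
  nlinarith [norm_nonneg a]

theorem inner_add_mul_norm_eq_zero_iff {a b : F} {c : ℝ} (hb : ‖b‖ ≤ c) :
    ⟪a, b⟫_ℝ + c * ‖a‖ = 0 ↔ a = 0 ∨ (‖b‖ = c ∧ ‖b‖ • a = -(‖a‖ • b)) := by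
  constructor
  · intro h
    by_cases ha : a = 0
    · exact Or.inl ha
    have ha_pos : 0 < ‖a‖ := norm_pos_iff.mpr ha
    have hcs : -(‖a‖ * ‖b‖) ≤ ⟪a, b⟫_ℝ := neg_le_of_abs_le (abs_real_inner_le_norm a b)
    have hbc : ‖b‖ = c := by nlinarith
    subst hbc
    exact Or.inr ⟨rfl, inner_eq_neg_norm_mul_iff_real.mp (by linarith)⟩
  · rintro (rfl | ⟨rfl, hab⟩)
    · simp
    · rw [inner_eq_neg_norm_mul_iff_real.mpr hab]
      ring

end Tangential

theorem inner_eq_inner_xt_add_xn_mul_xn {n : E} (hn : ‖n‖ = 1) (u r : E) :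
    ⟪u, r⟫_ℝ = ⟪xt n u, xt n r⟫_ℝ + xn n u * xn n r := by
  have hnn : ⟪n, n⟫_ℝ = 1 := by rw [real_inner_self_eq_norm_sq, hn, one_pow]
  simp only [xt, xn, inner_sub_left, inner_sub_right, real_inner_smul_left,
    real_inner_smul_right, hnn, real_inner_comm n r]
  ring

theorem mul_xn_eq_zero_of_mem_Kcone_of_xn_neg {n r : E} {μ : ℝ} (hμ : 0 ≤ μ)
    (hr : r ∈ Kcone n μ) (hrn : xn n r < 0) : μ * xn n r = 0 :=
  le_antisymm (mul_nonpos_of_nonneg_of_nonpos hμ hrn.le) ((norm_nonneg _).trans hr)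

/-- The bi-potential residual vanishes iff the Signorini complementarity
condition and the Coulomb friction condition (sticking or sliding with
opposite tangential velocity) hold. -/
theorem bipotential_residual_eq_zero_iff (n : E) (hn : ‖n‖ = 1) (μ : ℝ) (hμ : 0 ≤ μ)
    (u : E) (hu : 0 ≤ xn n u) (r : E) (hr : r ∈ Kcone n μ) :
    ⟪u, r⟫_ℝ + μ * xn n r * ‖xt n u‖ = 0 ↔
      (xn n u * xn n r = 0 ∧
        (xt n u = 0 ∨
          (‖xt n r‖ = μ * xn n r ∧ ‖xt n r‖ • xt n u = -(‖xt n u‖ • xt n r)))) := by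
  have hsplit : ⟪u, r⟫_ℝ + μ * xn n r * ‖xt n u‖
      = xn n u * xn n r + (⟪xt n u, xt n r⟫_ℝ + μ * xn n r * ‖xt n u‖) := by
    rw [inner_eq_inner_xt_add_xn_mul_xn hn]
    ring
  rw [hsplit, ← inner_add_mul_norm_eq_zero_iff hr]
  rcases le_or_gt 0 (xn n r) with hrn | hrn
  · exact add_eq_zero_iff_of_nonneg (mul_nonneg hu hrn) (inner_add_mul_norm_nonneg hr)
  · have hμrn := mul_xn_eq_zero_of_mem_Kcone_of_xn_neg hμ hr hrn
    have hrt : xt n r = 0 := norm_le_zero_iff.mp (hμrn ▸ hr)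
    simp [hrt, hμrn]
end
end

section
/- The modified direction of the bi-potential method is a descent direction for the augmented Lagrangian functional: let μ ∈ [0, 1], let W : E →L[ℝ] E be a symmetric continuous linear map (⟪W x, y⟫ = ⟪x, W y⟫ for all x, y), let u_free ∈ E, and define J(r) = (1/2) * ⟪r, W r⟫ + ⟪u_free, r⟫. Fix r ∈ E, set u = u_free + W r and D = u + (μ * ‖u_t‖) • n. Then J is Fréchet differentiable at r with derivative h ↦ ⟪u, h⟫, and the directional derivative of J at r along -D equals -(‖u‖^2 + μ * u_n * ‖u_t‖); in particular, if u_n ≥ 0 this directional derivative is ≤ 0. -/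
open scoped InnerProductSpace

noncomputable section

section

variable {F : Type*} [NormedAddCommGroup F] [InnerProductSpace ℝ F]

theorem hasFDerivAt_inner_self_apply (W : F →L[ℝ] F) (hW : (W : F →ₗ[ℝ] F).IsSymmetric)
    (r : F) : HasFDerivAt (fun s => ⟪s, W s⟫_ℝ) (innerSL ℝ ((2 : ℝ) • W r)) r := by
  refine ((hasFDerivAt_id r).inner ℝ W.hasFDerivAt).congr_fderiv ?_
  ext h
  have hsymm : ⟪r, W h⟫_ℝ = ⟪W r, h⟫_ℝ := (hW r h).symm
  simp only [ContinuousLinearMap.comp_apply, ContinuousLinearMap.prod_apply,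
    ContinuousLinearMap.id_apply, fderivInnerCLM_apply, innerSL_apply_apply, inner_smul_left,
    id_eq, RCLike.conj_to_real]
  rw [hsymm, real_inner_comm (W r) h]
  ring

theorem hasFDerivAt_half_inner_self_apply_add_inner (W : F →L[ℝ] F)
    (hW : (W : F →ₗ[ℝ] F).IsSymmetric) (b r : F) :
    HasFDerivAt (fun s => (1 / 2) * ⟪s, W s⟫_ℝ + ⟪b, s⟫_ℝ) (innerSL ℝ (b + W r)) r := by
  refine (((hasFDerivAt_inner_self_apply W hW r).const_mul (1 / 2)).add
    (innerSL ℝ b).hasFDerivAt).congr_fderiv ?_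
  ext h
  simp only [add_apply, smul_apply, innerSL_apply_apply,
    inner_add_left, inner_smul_left, RCLike.conj_to_real, smul_eq_mul]
  ring

theorem inner_neg_add_smul (u n : F) (c : ℝ) : ⟪u, -(u + c • n)⟫_ℝ = -(‖u‖ ^ 2 + c * ⟪u, n⟫_ℝ) := by
  rw [inner_neg_right, inner_add_right, inner_smul_right, real_inner_self_eq_norm_sq]

end

theorem bipotential_direction_is_descent_general (n : E)
    (μ : ℝ) (hμ0 : 0 ≤ μ)
    (W : E →L[ℝ] E) (hW : ∀ x y : E, ⟪W x, y⟫_ℝ = ⟪x, W y⟫_ℝ)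
    (ufree : E) (J : E → ℝ)
    (hJ : ∀ s : E, J s = (1 / 2) * ⟪s, W s⟫_ℝ + ⟪ufree, s⟫_ℝ)
    (r u D : E) (hu : u = ufree + W r) (hD : D = u + (μ * ‖xt n u‖) • n) :
    HasFDerivAt J (innerSL ℝ u) r ∧
      (innerSL ℝ u) (-D) = -(‖u‖ ^ 2 + μ * xn n u * ‖xt n u‖) ∧
      (0 ≤ xn n u → (innerSL ℝ u) (-D) ≤ 0) := by
  have hdir : (innerSL ℝ u) (-D) = -(‖u‖ ^ 2 + μ * xn n u * ‖xt n u‖) := by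
    rw [innerSL_apply_apply, hD, inner_neg_add_smul, xn]
    ring
  refine ⟨?_, hdir, fun hun => ?_⟩
  · rw [funext hJ, hu]
    exact hasFDerivAt_half_inner_self_apply_add_inner W hW ufree r
  · rw [hdir, neg_nonpos]
    positivity

/-- The modified direction `D = u + (μ ‖u_t‖) • n` of the bi-potential method is a
descent direction for the augmented Lagrangian functional
`J(r) = ½⟪r, W r⟫ + ⟪u_free, r⟫`: `J` is differentiable at `r` with derivative
`h ↦ ⟪u, h⟫`, and the directional derivative along `-D` equals
`-(‖u‖² + μ u_n ‖u_t‖)`, which is `≤ 0` whenever `u_n ≥ 0`. -/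
theorem bipotential_direction_is_descent (n : E) (hn : ‖n‖ = 1)
    (μ : ℝ) (hμ0 : 0 ≤ μ) (hμ1 : μ ≤ 1)
    (W : E →L[ℝ] E) (hW : ∀ x y : E, ⟪W x, y⟫_ℝ = ⟪x, W y⟫_ℝ)
    (ufree : E) (J : E → ℝ)
    (hJ : ∀ s : E, J s = (1 / 2) * ⟪s, W s⟫_ℝ + ⟪ufree, s⟫_ℝ)
    (r u D : E) (hu : u = ufree + W r) (hD : D = u + (μ * ‖xt n u‖) • n) :
    HasFDerivAt J (innerSL ℝ u) r ∧
      (innerSL ℝ u) (-D) = -(‖u‖ ^ 2 + μ * xn n u * ‖xt n u‖) ∧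
      (0 ≤ xn n u → (innerSL ℝ u) (-D) ≤ 0) :=
  bipotential_direction_is_descent_general n μ hμ0 W hW ufree J hJ r u D hu hD
end
end
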